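/- There exist no elements x, y in ℚ(ζ₃) with x² + 13 y² = -2; equivalently, -2 is not a norm from ℚ(ζ₃)(√-13) to ℚ(ζ₃). -/

import Mathlib

/-!
Since `13 ≡ 1 [MOD 3]`, Hensel's lemma lifts the root `3` of `X² + X + 1` modulo `13` to a primitive
cube root of unity in `ℚ_[13]`, so `ℚ(ζ₃)` embeds in `ℚ_[13]` and it suffices to show that
`x² + 13 y² = -2` has no `13`-adic solution. There `‖x²‖` and `‖13 y²‖` are distinct (an even and an
odd power of `13`), so both are at most `‖-2‖ = 1`; hence `x, y ∈ ℤ_[13]`, and reducing modulo `13`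
gives `x² ≡ -2`, which is impossible because `-2` is not a square modulo `13`.
-/

open Polynomial

namespace PadicInt

variable {p : ℕ} [Fact p.Prime] {a : ℤ_[p]}

theorem norm_two_mul_add_one_eq_one (hp : p ≠ 3) (ha : ‖a ^ 2 + a + 1‖ < 1) :
    ‖2 * a + 1‖ = 1 := by
  have h3 : ‖(-3 : ℤ_[p])‖ = 1 := by
    rw [norm_neg, ← Nat.cast_ofNat, norm_natCast_eq_one_iff]
    exact (Nat.coprime_primes Fact.out Nat.prime_three).mpr hp
  have h4 : ‖4 * (a ^ 2 + a + 1)‖ < 1 := by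
    calc ‖4 * (a ^ 2 + a + 1)‖ ≤ ‖a ^ 2 + a + 1‖ := by
          rw [norm_mul]; exact mul_le_of_le_one_left (norm_nonneg _) (norm_le_one _)
      _ < 1 := ha
  have hsq : ‖(2 * a + 1) ^ 2‖ = 1 := by
    rw [show (2 * a + 1) ^ 2 = 4 * (a ^ 2 + a + 1) + -3 by ring,
      norm_add_eq_max_of_ne (by rw [h3]; exact h4.ne), h3, max_eq_right h4.le]
  rwa [norm_pow, pow_eq_one_iff_of_nonneg (norm_nonneg _) two_ne_zero] at hsq

theorem exists_sq_add_self_add_one_eq_zero (hp : p ≠ 3) (ha : ‖a ^ 2 + a + 1‖ < 1) :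
    ∃ z : ℤ_[p], z ^ 2 + z + 1 = 0 := by
  have hF : (X ^ 2 + X + 1 : ℤ[X]).aeval a = a ^ 2 + a + 1 := by simp
  have hF' : (X ^ 2 + X + 1 : ℤ[X]).derivative.aeval a = 2 * a + 1 := by simp [map_ofNat]
  obtain ⟨z, hz, -⟩ := hensels_lemma (F := (X ^ 2 + X + 1 : ℤ[X])) (a := a) (by
    rwa [hF, hF', norm_two_mul_add_one_eq_one hp ha, one_pow])
  exact ⟨z, by simpa using hz⟩

end PadicInt

theorem IsCyclotomicExtension.nonempty_algHom_of_sq_add_self_add_one_eq_zero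
    (K : Type*) [Field K] [Algebra ℚ K] [IsCyclotomicExtension {3} ℚ K]
    {L : Type*} [Ring L] [Algebra ℚ L] {z : L} (hz : z ^ 2 + z + 1 = 0) :
    Nonempty (K →ₐ[ℚ] L) := by
  have hζ := IsCyclotomicExtension.zeta_spec 3 ℚ K
  refine ⟨(hζ.powerBasis ℚ).lift z ?_⟩
  rw [IsPrimitiveRoot.powerBasis_gen,
    ← hζ.minpoly_eq_cyclotomic_of_irreducible (cyclotomic.irreducible_rat (by norm_num)),
    cyclotomic_three]
  simpa using hz

namespace Padic

variable {p : ℕ} [Fact p.Prime]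

theorem norm_sq_ne_norm_p_mul_sq (x : ℚ_[p]) {y : ℚ_[p]} (hy : y ≠ 0) :
    ‖x ^ 2‖ ≠ ‖(p : ℚ_[p]) * y ^ 2‖ := by
  have hp : (p : ℚ_[p]) ≠ 0 := mod_cast (Fact.out : p.Prime).ne_zero
  rcases eq_or_ne x 0 with rfl | hx
  · simpa [hy] using Nat.Prime.ne_zero Fact.out
  rw [norm_eq_zpow_neg_valuation (pow_ne_zero 2 hx),
    norm_eq_zpow_neg_valuation (mul_ne_zero hp (pow_ne_zero 2 hy)),
    valuation_mul hp (pow_ne_zero 2 hy), valuation_p, valuation_pow, valuation_pow]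
  intro h
  have := zpow_right_injective₀ (by exact_mod_cast (Nat.Prime.pos Fact.out))
    (by exact_mod_cast (Nat.Prime.one_lt Fact.out).ne') h
  omega

theorem norm_le_one_of_sq_add_p_mul_sq_eq {x y u : ℚ_[p]} (hu : ‖u‖ = 1)
    (h : x ^ 2 + p * y ^ 2 = u) : ‖x‖ ≤ 1 ∧ ‖y‖ ≤ 1 := by
  rcases eq_or_ne y 0 with rfl | hy
  · rw [← h, zero_pow two_ne_zero, mul_zero, add_zero, norm_pow,
      pow_eq_one_iff_of_nonneg (norm_nonneg _) two_ne_zero] at hu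
    simp [hu]
  have hmax := add_eq_max_of_ne (norm_sq_ne_norm_p_mul_sq x hy)
  rw [h, hu] at hmax
  have hx : ‖x ^ 2‖ ≤ 1 := hmax ▸ le_max_left _ _
  have hpy : ‖(p : ℚ_[p]) * y ^ 2‖ ≤ 1 := hmax ▸ le_max_right _ _
  have hp : (p : ℚ_[p]) ≠ 0 := mod_cast (Fact.out : p.Prime).ne_zero
  rw [norm_pow, pow_le_one_iff_of_nonneg (norm_nonneg _) two_ne_zero] at hx
  rw [norm_le_one_iff_val_nonneg, valuation_mul hp (pow_ne_zero 2 hy), valuation_p,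
    valuation_pow] at hpy
  refine ⟨hx, ?_⟩
  rw [norm_le_one_iff_val_nonneg]
  omega

theorem not_exists_sq_add_p_mul_sq_eq_intCast {a : ℤ} (ha : ¬ IsSquare (a : ZMod p)) :
    ¬ ∃ x y : ℚ_[p], x ^ 2 + p * y ^ 2 = a := by
  rintro ⟨x, y, h⟩
  have hu : ‖(a : ℚ_[p])‖ = 1 := by
    refine (norm_int_le_one a).eq_or_lt.resolve_right fun hlt => ha ?_
    rw [(ZMod.intCast_zmod_eq_zero_iff_dvd a p).mpr (norm_intCast_lt_one_iff.mp hlt)]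
    exact IsSquare.zero
  obtain ⟨hx, hy⟩ := norm_le_one_of_sq_add_p_mul_sq_eq hu h
  obtain ⟨X, rfl⟩ : ∃ X : ℤ_[p], (X : ℚ_[p]) = x := ⟨⟨x, hx⟩, rfl⟩
  obtain ⟨Y, rfl⟩ : ∃ Y : ℤ_[p], (Y : ℚ_[p]) = y := ⟨⟨y, hy⟩, rfl⟩
  have hXY : X ^ 2 + p * Y ^ 2 = a := PadicInt.ext (by exact_mod_cast h)
  have := congrArg PadicInt.toZMod hXY
  simp only [map_add, map_pow, map_mul, map_natCast, CharP.cast_eq_zero, zero_mul, add_zero,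
    map_intCast] at this
  exact ha ⟨PadicInt.toZMod X, by rw [← this]; ring⟩

end Padic

/-- There exist no elements `x, y` in `ℚ(ζ₃)` (the third cyclotomic field) with
`x² + 13 y² = -2`; equivalently, `-2` is not a norm from `ℚ(ζ₃)(√-13)` to `ℚ(ζ₃)`. -/
theorem neg_two_not_norm_from_sqrt_neg_thirteen :
    ¬ ∃ x y : CyclotomicField 3 ℚ, x ^ 2 + 13 * y ^ 2 = -2 := by
  have hsq : ¬ IsSquare ((-2 : ℤ) : ZMod 13) := by decide
  rintro ⟨x, y, h⟩
  have : Fact (Nat.Prime 13) := ⟨by norm_num⟩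
  have : IsCyclotomicExtension {3} ℚ (CyclotomicField 3 ℚ) :=
    CyclotomicField.isCyclotomicExtension 3 ℚ
  obtain ⟨z, hz⟩ := PadicInt.exists_sq_add_self_add_one_eq_zero (p := 13) (by norm_num)
    (a := 3) (by rw [PadicInt.norm_lt_one_iff_dvd]; exact ⟨1, by norm_num⟩)
  obtain ⟨φ⟩ := IsCyclotomicExtension.nonempty_algHom_of_sq_add_self_add_one_eq_zero
    (CyclotomicField 3 ℚ) (z := (z : ℚ_[13]))
    (by exact_mod_cast congrArg ((↑) : ℤ_[13] → ℚ_[13]) hz)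
  refine Padic.not_exists_sq_add_p_mul_sq_eq_intCast hsq ⟨φ x, φ y, ?_⟩
  simpa [map_ofNat] using congrArg φ h
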